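/- Let γ > 0 and let F : ℝ^d → ℝ be twice differentiable with L₂-Lipschitz Hessian, and fix x ∈ ℝ^d. On a probability space let H : Ω → S^d be a random symmetric matrix with E‖∇²F(x) − H‖_op < ∞, let u : Ω → ℝ^d be a random vector such that on the event {λ_min(H) ≤ −4γ} one has ‖u‖ = 1 and ⟨u, H u⟩ ≤ −2γ, and let r be a Rademacher random variable (uniform on {−1, +1}) independent of (H, u). Define y := x + (γ/L₂)·r·u on the event {λ_min(H) ≤ −4γ} and y := x otherwise, and assume F∘y is integrable. Then E[F(x) − F(y)] ≥ (5γ³/(6L₂²))·P(λ_min(H) ≤ −4γ) − (γ²/(2L₂²))·E‖∇²F(x) − H‖_op. -/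

import Mathlib

/-!
Along the step `s = (γ / L₂) r u` we have `‖s‖ = γ / L₂`, so the third-order Taylor bound for a
function with `L₂`-Lipschitz Hessian gives
`F x - F y ≥ -(γ / L₂) r ⟪∇F x, u⟫ - (γ / L₂)² ⟪u, ∇²F x u⟫ / 2 - γ³ / (6 L₂²)`.
On the event `λ_min(H) ≤ -4γ`, `⟪u, ∇²F x u⟫ ≤ ⟪u, H u⟫ + ‖∇²F x - H‖ ≤ -2γ + ‖∇²F x - H‖`, which
turns the last two terms into `5γ³ / (6 L₂²) - γ² / (2 L₂²) ‖∇²F x - H‖`. The first-order term is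
`r` times a bounded function of `(H, u)`; as `r` is centred and independent of `(H, u)`, its mean
is zero.
-/

open MeasureTheory ProbabilityTheory
open scoped RealInnerProductSpace

/-- The smallest eigenvalue of a (self-adjoint) operator on `ℝ^d`, as the infimum of the
Rayleigh quotient over the unit sphere. -/
noncomputable def lambdaMin {d : ℕ}
    (A : EuclideanSpace ℝ (Fin d) →L[ℝ] EuclideanSpace ℝ (Fin d)) : ℝ :=
  ⨅ u : {v : EuclideanSpace ℝ (Fin d) // ‖v‖ = 1}, ⟪u.1, A u.1⟫

open Set

theorem image_one_le_of_deriv2_le_add_mul {f f' f'' : ℝ → ℝ} {C : ℝ}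
    (hf : ∀ t ∈ Icc (0 : ℝ) 1, HasDerivAt f (f' t) t)
    (hf' : ∀ t ∈ Icc (0 : ℝ) 1, HasDerivAt f' (f'' t) t)
    (hC : ∀ t ∈ Icc (0 : ℝ) 1, f'' t ≤ f'' 0 + C * t) :
    f 1 ≤ f 0 + f' 0 + f'' 0 / 2 + C / 6 := by
  have hf'_le : ∀ t ∈ Icc (0 : ℝ) 1, f' t ≤ f' 0 + t * f'' 0 + C * t ^ 2 / 2 := by
    refine image_le_of_deriv_right_le_deriv_boundary (HasDerivAt.continuousOn hf')
      (fun t ht ↦ (hf' t (Ico_subset_Icc_self ht)).hasDerivWithinAt) (B' := fun t ↦ f'' 0 + C * t)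
      (by simp) (by fun_prop) (fun t _ ↦ HasDerivAt.hasDerivWithinAt ?_)
      (fun t ht ↦ hC t (Ico_subset_Icc_self ht))
    exact ((((hasDerivAt_id t).mul_const (f'' 0)).const_add (f' 0)).add
      (((hasDerivAt_pow 2 t).const_mul C).div_const 2)).congr_deriv (by ring)
  have hf_le := image_le_of_deriv_right_le_deriv_boundary (HasDerivAt.continuousOn hf)
    (fun t ht ↦ (hf t (Ico_subset_Icc_self ht)).hasDerivWithinAt)
    (B := fun t ↦ f 0 + t * f' 0 + t ^ 2 / 2 * f'' 0 + C * t ^ 3 / 6)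
    (B' := fun t ↦ f' 0 + t * f'' 0 + C * t ^ 2 / 2)
    (by simp) (by fun_prop) (fun t _ ↦ HasDerivAt.hasDerivWithinAt ?_)
    (fun t ht ↦ hf'_le t (Ico_subset_Icc_self ht)) (right_mem_Icc.2 zero_le_one)
  · linarith
  · exact ((((hasDerivAt_id t).mul_const (f' 0)).const_add (f 0)).add
      (((hasDerivAt_pow 2 t).div_const 2).mul_const (f'' 0))).add
      (((hasDerivAt_pow 3 t).const_mul C).div_const 6) |>.congr_deriv (by ring)

section InnerProductSpace

variable {E : Type*} [NormedAddCommGroup E] [InnerProductSpace ℝ E]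

theorem real_inner_apply_le_opNorm_mul_sq (T : E →L[ℝ] E) (v : E) :
    ⟪v, T v⟫ ≤ ‖T‖ * ‖v‖ ^ 2 :=
  calc ⟪v, T v⟫ ≤ ‖v‖ * ‖T v‖ := real_inner_le_norm _ _
    _ ≤ ‖v‖ * (‖T‖ * ‖v‖) := by gcongr; exact T.le_opNorm v
    _ = ‖T‖ * ‖v‖ ^ 2 := by ring

theorem apply_add_le_of_hessian_lipschitz [CompleteSpace E] {F : E → ℝ} {gradF : E → E}
    {hessF : E → E →L[ℝ] E} {L₂ : ℝ} (hgrad : ∀ z, HasGradientAt F (gradF z) z)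
    (hhess : ∀ z, HasFDerivAt gradF (hessF z) z)
    (hlip : ∀ z w, ‖hessF z - hessF w‖ ≤ L₂ * ‖z - w‖) (x s : E) :
    F (x + s) ≤ F x + ⟪gradF x, s⟫ + ⟪s, hessF x s⟫ / 2 + L₂ * ‖s‖ ^ 3 / 6 := by
  set line : ℝ → E := fun t ↦ x + t • s
  have hline : ∀ t, HasDerivAt line s t := fun t ↦
    (((hasDerivAt_id t).smul_const s).const_add x).congr_deriv (one_smul ℝ s)
  have hf : ∀ t ∈ Icc (0 : ℝ) 1, HasDerivAt (fun t ↦ F (line t)) ⟪s, gradF (line t)⟫ t :=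
    fun t _ ↦ ((hgrad (line t)).hasFDerivAt.comp_hasDerivAt t (hline t)).congr_deriv
      (by simp [real_inner_comm])
  have hf' : ∀ t ∈ Icc (0 : ℝ) 1,
      HasDerivAt (fun t ↦ ⟪s, gradF (line t)⟫) ⟪s, hessF (line t) s⟫ t :=
    fun t _ ↦ (innerSL ℝ s).hasFDerivAt.comp_hasDerivAt t
      ((hhess (line t)).comp_hasDerivAt t (hline t))
  have hC : ∀ t ∈ Icc (0 : ℝ) 1,
      ⟪s, hessF (line t) s⟫ ≤ ⟪s, hessF (line 0) s⟫ + L₂ * ‖s‖ ^ 3 * t := by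
    intro t ht
    have hdist : ‖line t - line 0‖ = t * ‖s‖ := by
      simp [line, norm_smul, abs_of_nonneg ht.1]
    calc ⟪s, hessF (line t) s⟫
        = ⟪s, hessF (line 0) s⟫ + ⟪s, (hessF (line t) - hessF (line 0)) s⟫ := by
          simp [inner_sub_right]
      _ ≤ ⟪s, hessF (line 0) s⟫ + L₂ * ‖line t - line 0‖ * ‖s‖ ^ 2 := by
          gcongr
          exact (real_inner_apply_le_opNorm_mul_sq _ s).trans
            (mul_le_mul_of_nonneg_right (hlip _ _) (sq_nonneg _))
      _ = ⟪s, hessF (line 0) s⟫ + L₂ * ‖s‖ ^ 3 * t := by rw [hdist]; ring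
  have := image_one_le_of_deriv2_le_add_mul hf hf' hC
  simpa [line, real_inner_comm s (gradF x)] using this

theorem le_sub_apply_add_smul_of_negCurvature [CompleteSpace E] {F : E → ℝ} {gradF : E → E}
    {hessF : E → E →L[ℝ] E} {L₂ γ ρ : ℝ} (hgrad : ∀ z, HasGradientAt F (gradF z) z)
    (hhess : ∀ z, HasFDerivAt gradF (hessF z) z)
    (hlip : ∀ z w, ‖hessF z - hessF w‖ ≤ L₂ * ‖z - w‖) (hγ : 0 ≤ γ) (x u : E) (H : E →L[ℝ] E)
    (hu : ‖u‖ = 1) (huH : ⟪u, H u⟫ ≤ -2 * γ) (hρ : |ρ| = 1) :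
    ρ * (-(γ / L₂) * ⟪gradF x, u⟫)
        + (5 * γ ^ 3 / (6 * L₂ ^ 2) - γ ^ 2 / (2 * L₂ ^ 2) * ‖hessF x - H‖)
      ≤ F x - F (x + (γ / L₂ * ρ) • u) := by
  have hL₂ : 0 ≤ L₂ := by
    have hlip_u := hlip (x + u) x
    rw [add_sub_cancel_left, hu, mul_one] at hlip_u
    exact (norm_nonneg _).trans hlip_u
  set c := γ / L₂ with hc
  have hnorm : ‖(c * ρ) • u‖ = c := by
    rw [norm_smul, hu, Real.norm_eq_abs, abs_mul, hρ, abs_of_nonneg (div_nonneg hγ hL₂)]; ring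
  have hcurv : ⟪(c * ρ) • u, hessF x ((c * ρ) • u)⟫ ≤ c ^ 2 * (-2 * γ + ‖hessF x - H‖) := by
    have hρ2 : ρ ^ 2 = 1 := by rw [← sq_abs, hρ, one_pow]
    have hsplit : ⟪u, hessF x u⟫ = ⟪u, H u⟫ + ⟪u, (hessF x - H) u⟫ := by
      simp [inner_sub_right]
    have hdev := real_inner_apply_le_opNorm_mul_sq (hessF x - H) u
    rw [hu, one_pow, mul_one] at hdev
    rw [map_smul, real_inner_smul_left, real_inner_smul_right, ← mul_assoc,
      show c * ρ * (c * ρ) = c ^ 2 by linear_combination c ^ 2 * hρ2]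
    gcongr
    linarith
  have hconst : c ^ 2 * γ - L₂ * c ^ 3 / 6 = 5 * γ ^ 3 / (6 * L₂ ^ 2) := by
    -- for `L₂ = 0` both sides vanish, by the convention `γ / 0 = 0`
    rcases hL₂.eq_or_lt with h | h
    · simp [hc, ← h]
    · rw [hc]; field_simp; ring
  have htaylor := apply_add_le_of_hessian_lipschitz hgrad hhess hlip x ((c * ρ) • u)
  rw [hnorm, real_inner_smul_right] at htaylor
  have hcN : γ ^ 2 / (2 * L₂ ^ 2) * ‖hessF x - H‖ = c ^ 2 * ‖hessF x - H‖ / 2 := by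
    rw [hc]; ring
  linarith

end InnerProductSpace

section lambdaMin

variable {d : ℕ}

theorem bddBelow_range_inner_apply_unit
    (A : EuclideanSpace ℝ (Fin d) →L[ℝ] EuclideanSpace ℝ (Fin d)) :
    BddBelow (range fun v : {v : EuclideanSpace ℝ (Fin d) // ‖v‖ = 1} ↦ ⟪v.1, A v.1⟫) := by
  refine ⟨-‖A‖, ?_⟩
  rintro _ ⟨v, rfl⟩
  have := real_inner_apply_le_opNorm_mul_sq (-A) v.1
  rw [v.2, one_pow, mul_one, norm_neg, neg_apply, inner_neg_right] at this
  exact neg_le.mp this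

theorem lambdaMin_le_add_norm_sub (M N : EuclideanSpace ℝ (Fin d) →L[ℝ] EuclideanSpace ℝ (Fin d)) :
    lambdaMin M ≤ lambdaMin N + ‖M - N‖ := by
  rcases isEmpty_or_nonempty {v : EuclideanSpace ℝ (Fin d) // ‖v‖ = 1} with h | h
  · simp [lambdaMin, Real.iInf_of_isEmpty]
  · suffices lambdaMin M - ‖M - N‖ ≤ lambdaMin N by linarith
    refine le_ciInf fun v ↦ ?_
    have hM : lambdaMin M ≤ ⟪v.1, M v.1⟫ := ciInf_le (bddBelow_range_inner_apply_unit M) v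
    have hMN := real_inner_apply_le_opNorm_mul_sq (M - N) v.1
    rw [v.2, one_pow, mul_one, sub_apply, inner_sub_right] at hMN
    linarith

theorem lipschitzWith_lambdaMin : LipschitzWith 1 (lambdaMin (d := d)) :=
  LipschitzWith.of_le_add fun M N ↦ dist_eq_norm M N ▸ lambdaMin_le_add_norm_sub M N

theorem measurable_lambdaMin : Measurable (lambdaMin (d := d)) :=
  lipschitzWith_lambdaMin.continuous.measurable

end lambdaMin

section Rademacher

variable {Ω : Type*} [MeasurableSpace Ω] {μ : Measure Ω} [IsProbabilityMeasure μ] {r : Ω → ℝ}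

theorem ae_eq_one_or_eq_neg_one_of_measure_eq_half (hr : Measurable r)
    (hr1 : μ {ω | r ω = 1} = 1 / 2) (hr2 : μ {ω | r ω = -1} = 1 / 2) :
    ∀ᵐ ω ∂μ, r ω = 1 ∨ r ω = -1 := by
  have h1 : MeasurableSet {ω | r ω = 1} := hr (measurableSet_singleton 1)
  have h2 : MeasurableSet {ω | r ω = -1} := hr (measurableSet_singleton (-1))
  have hdisj : Disjoint {ω | r ω = 1} {ω | r ω = -1} :=
    disjoint_left.2 fun ω (h : r ω = 1) (h' : r ω = -1) ↦ by linarith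
  have hunion : ∀ᵐ ω ∂μ, ω ∈ {ω | r ω = 1} ∪ {ω | r ω = -1} := by
    rw [ae_mem_iff_measure_eq (h1.union h2).nullMeasurableSet, measure_union hdisj h2, hr1, hr2,
      ENNReal.add_halves, measure_univ]
  exact hunion

theorem integral_eq_zero_of_measure_eq_half (hr : Measurable r)
    (hr1 : μ {ω | r ω = 1} = 1 / 2) (hr2 : μ {ω | r ω = -1} = 1 / 2) :
    ∫ ω, r ω ∂μ = 0 := by
  have h1 : MeasurableSet {ω | r ω = 1} := hr (measurableSet_singleton 1)
  have hr_eq : r =ᵐ[μ] fun ω ↦ 2 * {ω | r ω = 1}.indicator 1 ω - 1 := by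
    filter_upwards [ae_eq_one_or_eq_neg_one_of_measure_eq_half hr hr1 hr2] with ω hω
    rcases hω with h | h <;> norm_num [indicator, h]
  rw [integral_congr_ae hr_eq, integral_sub ((integrable_indicator_iff h1).2
    (integrable_const 1).integrableOn |>.const_mul 2) (integrable_const 1), integral_const_mul,
    integral_indicator_one h1, measureReal_def, hr1]
  simp

theorem integral_mul_eq_zero_of_indepFun (hr : Measurable r)
    (hr1 : μ {ω | r ω = 1} = 1 / 2) (hr2 : μ {ω | r ω = -1} = 1 / 2) {φ : Ω → ℝ}
    (hindep : IndepFun r φ μ) (hφ : AEStronglyMeasurable φ μ) :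
    ∫ ω, r ω * φ ω ∂μ = 0 := by
  rw [← Pi.mul_def, hindep.integral_mul_eq_mul_integral hr.aestronglyMeasurable hφ,
    integral_eq_zero_of_measure_eq_half hr hr1 hr2, zero_mul]

theorem setIntegral_le_integral_of_rademacher_mul_add_le (hr : Measurable r)
    (hr1 : μ {ω | r ω = 1} = 1 / 2) (hr2 : μ {ω | r ω = -1} = 1 / 2) {ψ G Z : Ω → ℝ} {C : ℝ}
    {A : Set Ω} (hindep : IndepFun r (A.indicator ψ) μ) (hψ : Measurable ψ)
    (hψC : ∀ ω ∈ A, ‖ψ ω‖ ≤ C) (hA : MeasurableSet A) (hG : IntegrableOn G A μ)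
    (hZ : Integrable Z μ) (hle : ∀ ω ∈ A, |r ω| = 1 → r ω * ψ ω + G ω ≤ Z ω)
    (hZ_nonneg : ∀ ω ∉ A, 0 ≤ Z ω) :
    ∫ ω in A, G ω ∂μ ≤ ∫ ω, Z ω ∂μ := by
  have hr_abs : ∀ᵐ ω ∂μ, |r ω| = 1 := by
    filter_upwards [ae_eq_one_or_eq_neg_one_of_measure_eq_half hr hr1 hr2] with ω hω
    rcases hω with h | h <;> simp [h]
  have hrψ : Integrable (fun ω ↦ r ω * A.indicator ψ ω) μ := by
    refine Integrable.of_bound (hr.mul (hψ.indicator hA)).aestronglyMeasurable (max C 0) ?_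
    filter_upwards [hr_abs] with ω hω
    by_cases hωA : ω ∈ A
    · rw [indicator_of_mem hωA, norm_mul, Real.norm_eq_abs, hω, one_mul]
      exact le_max_of_le_left (hψC ω hωA)
    · simp [indicator_of_notMem hωA]
  have hGA : Integrable (A.indicator G) μ := (integrable_indicator_iff hA).2 hG
  calc ∫ ω in A, G ω ∂μ = ∫ ω, (r ω * A.indicator ψ ω + A.indicator G ω) ∂μ := by
        rw [integral_add hrψ hGA, integral_mul_eq_zero_of_indepFun hr hr1 hr2 hindep
          (hψ.indicator hA).aestronglyMeasurable, integral_indicator hA, zero_add]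
    _ ≤ ∫ ω, Z ω ∂μ := by
        refine integral_mono_ae (hrψ.add hGA) hZ ?_
        filter_upwards [hr_abs] with ω hω
        by_cases hωA : ω ∈ A
        · simpa [indicator_of_mem hωA] using hle ω hωA hω
        · simpa [indicator_of_notMem hωA] using hZ_nonneg ω hωA

end Rademacher

theorem stmt_4 {d : ℕ} {Ω : Type*} [MeasurableSpace Ω]
    (μ : Measure Ω) [IsProbabilityMeasure μ]
    (γ : ℝ) (hγ : 0 < γ)
    (F : EuclideanSpace ℝ (Fin d) → ℝ)
    (gradF : EuclideanSpace ℝ (Fin d) → EuclideanSpace ℝ (Fin d))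
    (hessF : EuclideanSpace ℝ (Fin d) →
      EuclideanSpace ℝ (Fin d) →L[ℝ] EuclideanSpace ℝ (Fin d))
    (L₂ : ℝ)
    (hgrad : ∀ z, HasGradientAt F (gradF z) z)
    (hhess : ∀ z, HasFDerivAt gradF (hessF z) z)
    (hlip : ∀ z w, ‖hessF z - hessF w‖ ≤ L₂ * ‖z - w‖)
    (x : EuclideanSpace ℝ (Fin d))
    (H : Ω → EuclideanSpace ℝ (Fin d) →L[ℝ] EuclideanSpace ℝ (Fin d))
    (hH_meas : Measurable H)
    (hH_int : Integrable (fun ω => ‖hessF x - H ω‖) μ)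
    (u : Ω → EuclideanSpace ℝ (Fin d)) (hu_meas : Measurable u)
    (hu : ∀ ω, lambdaMin (H ω) ≤ -4 * γ → ‖u ω‖ = 1 ∧ ⟪u ω, H ω (u ω)⟫ ≤ -2 * γ)
    (r : Ω → ℝ) (hr_meas : Measurable r)
    (hr1 : μ {ω | r ω = 1} = 1 / 2) (hr2 : μ {ω | r ω = -1} = 1 / 2)
    (hindep : IndepFun r (fun ω => (H ω, u ω)) μ)
    (y : Ω → EuclideanSpace ℝ (Fin d))
    (hy_nc : ∀ ω, lambdaMin (H ω) ≤ -4 * γ → y ω = x + (γ / L₂ * r ω) • u ω)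
    (hy_eq : ∀ ω, ¬(lambdaMin (H ω) ≤ -4 * γ) → y ω = x)
    (hFy : Integrable (fun ω => F (y ω)) μ) :
    ∫ ω, (F x - F (y ω)) ∂μ ≥
      5 * γ ^ 3 / (6 * L₂ ^ 2) * (μ {ω | lambdaMin (H ω) ≤ -4 * γ}).toReal
      - γ ^ 2 / (2 * L₂ ^ 2) * ∫ ω, ‖hessF x - H ω‖ ∂μ := by
  set K₁ := 5 * γ ^ 3 / (6 * L₂ ^ 2)
  set K₂ := γ ^ 2 / (2 * L₂ ^ 2)
  set A := {ω | lambdaMin (H ω) ≤ -4 * γ}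
  have hA : MeasurableSet A := measurable_lambdaMin.comp hH_meas measurableSet_Iic
  have hindepφ : IndepFun r (A.indicator fun ω ↦ -(γ / L₂) * ⟪gradF x, u ω⟫) μ :=
    hindep.comp measurable_id
      ((measurable_const.mul (measurable_const.inner measurable_snd)).indicator
        (measurable_lambdaMin.comp measurable_fst measurableSet_Iic))
  calc K₁ * (μ A).toReal - K₂ * ∫ ω, ‖hessF x - H ω‖ ∂μ
      ≤ K₁ * (μ A).toReal - K₂ * ∫ ω in A, ‖hessF x - H ω‖ ∂μ := by
        gcongr _ - _ * ?_
        exact setIntegral_le_integral hH_int (.of_forall fun ω ↦ norm_nonneg _)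
    _ = ∫ ω in A, (K₁ - K₂ * ‖hessF x - H ω‖) ∂μ := by
        rw [integral_sub (integrable_const K₁).integrableOn (hH_int.const_mul K₂).integrableOn,
          setIntegral_const, integral_const_mul, smul_eq_mul, measureReal_def, mul_comm]
    _ ≤ ∫ ω, (F x - F (y ω)) ∂μ := by
        refine setIntegral_le_integral_of_rademacher_mul_add_le (C := ‖γ / L₂‖ * ‖gradF x‖)
          hr_meas hr1 hr2 hindepφ
          (measurable_const.mul (measurable_const.inner hu_meas)) (fun ω hω ↦ ?_) hA
          ((integrable_const K₁).sub (hH_int.const_mul K₂)).integrableOn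
          ((integrable_const (F x)).sub hFy) (fun ω hω hrω ↦ ?_) fun ω hω ↦ by simp [hy_eq ω hω]
        · rw [norm_mul, norm_neg]
          gcongr
          simpa [(hu ω hω).1] using norm_inner_le_norm (𝕜 := ℝ) (gradF x) (u ω)
        · rw [hy_nc ω hω]
          exact le_sub_apply_add_smul_of_negCurvature hgrad hhess hlip hγ.le x (u ω) (H ω)
            (hu ω hω).1 (hu ω hω).2 hrω
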